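/- Let Σ be a positive definite real symmetric matrix indexed by a three-part sum type α ⊕ β ⊕ γ, with blocks labelled X, Y₁, Y₂, and write Y for the combined block β ⊕ γ. Then the α × γ submatrix of the regression-coefficient matrix Σ_{X,Y} (Σ_{Y,Y})⁻¹ (i.e., the block of columns indexed by Y₂) is the zero matrix if and only if Σ_{X,Y₂|Y₁} := Σ_{X,Y₂} − Σ_{X,Y₁} (Σ_{Y₁,Y₁})⁻¹ Σ_{Y₁,Y₂} = 0. -/

import Mathlib

open Matrix

lemma posDef_submatrix_of_injective {n m : Type*} [Fintype n] [Fintype m] [DecidableEq n]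
    {M : Matrix n n ℝ} (hM : M.PosDef) {f : m → n}
    (hf : Function.Injective f) : (M.submatrix f f).PosDef := by
  classical
  refine posDef_iff_dotProduct_mulVec.mpr ⟨hM.1.submatrix f, fun x hx => ?_⟩
  set E : Matrix n m ℝ := (1 : Matrix n n ℝ).submatrix id f with hE
  have hEx : ∀ j, (E *ᵥ x) (f j) = x j := by
    intro j
    simp [hE, mulVec, dotProduct, one_apply, hf.eq_iff]
  have hy0 : E *ᵥ x ≠ 0 := by
    intro h
    apply hx
    funext j
    have := congrFun h (f j)
    rw [hEx j] at this
    simpa using this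
  have hsub : Eᵀ * M * E = M.submatrix f f := by
    ext j k
    simp [hE, mul_apply, one_apply, Finset.sum_ite_eq]
  have key : x ⬝ᵥ (M.submatrix f f) *ᵥ x = (E *ᵥ x) ⬝ᵥ M *ᵥ (E *ᵥ x) := by
    rw [← hsub, ← mulVec_mulVec, dotProduct_mulVec, dotProduct_mulVec, ← vecMul_vecMul,
      vecMul_transpose]
    rw [dotProduct_mulVec (E *ᵥ x) M, dotProduct_mulVec ((E *ᵥ x) ᵥ* M) E x]
  have := hM.dotProduct_mulVec_pos hy0
  simpa [key] using this

/-- For a positive definite matrix with blocks `X, Y₁, Y₂` (with `Y = Y₁ ∪ Y₂`), the `Y₂`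
block of columns of the regression-coefficient matrix `Σ_{X,Y} (Σ_{Y,Y})⁻¹` vanishes iff the
partial covariance `Σ_{X,Y₂|Y₁} = Σ_{X,Y₂} − Σ_{X,Y₁} (Σ_{Y₁,Y₁})⁻¹ Σ_{Y₁,Y₂}` vanishes. -/
theorem stmt_6 {α β γ : Type*} [Fintype α] [Fintype β] [Fintype γ]
    [DecidableEq α] [DecidableEq β] [DecidableEq γ]
    (S : Matrix (α ⊕ β ⊕ γ) (α ⊕ β ⊕ γ) ℝ)
    (hPD : S.PosDef)
    (ιX : α → α ⊕ β ⊕ γ) (ιY₁ : β → α ⊕ β ⊕ γ) (ιY₂ : γ → α ⊕ β ⊕ γ)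
    (ιY : β ⊕ γ → α ⊕ β ⊕ γ)
    (hιX : ιX = Sum.inl) (hιY₁ : ιY₁ = Sum.inr ∘ Sum.inl) (hιY₂ : ιY₂ = Sum.inr ∘ Sum.inr)
    (hιY : ιY = Sum.elim ιY₁ ιY₂) :
    (S.submatrix ιX ιY * (S.submatrix ιY ιY)⁻¹).submatrix id Sum.inr = 0 ↔
      S.submatrix ιX ιY₂
          - S.submatrix ιX ιY₁ * (S.submatrix ιY₁ ιY₁)⁻¹ * S.submatrix ιY₁ ιY₂ = 0 := by
  have hinjY : Function.Injective ιY := by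
    intro a b h
    cases a <;> cases b <;>
      simp [hιY, hιY₁, hιY₂] at h <;> simp [h]
  have hinj₁ : Function.Injective ιY₁ := by
    intro a b h; rw [hιY₁] at h; simpa using h
  set A := S.submatrix ιX ιY₁ with hA
  set B := S.submatrix ιX ιY₂ with hB
  set P := S.submatrix ιY₁ ιY₁ with hP
  set Q := S.submatrix ιY₁ ιY₂ with hQ
  set Q' := S.submatrix ιY₂ ιY₁ with hQ'
  set R := S.submatrix ιY₂ ιY₂ with hR
  have hPpd : P.PosDef := posDef_submatrix_of_injective hPD hinj₁
  have hNpd : (S.submatrix ιY ιY).PosDef := posDef_submatrix_of_injective hPD hinjY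
  haveI : Invertible P := hPpd.isUnit.invertible
  have hblocks : S.submatrix ιY ιY = fromBlocks P Q Q' R := by
    subst hιY
    ext (i | i) (j | j) <;> rfl
  have hXY : S.submatrix ιX ιY = fromCols A B := by
    subst hιY
    ext i (j | j) <;> rfl
  have hdet : (S.submatrix ιY ιY).det ≠ 0 := hNpd.det_pos.ne'
  have hdetP : P.det ≠ 0 := hPpd.det_pos.ne'
  have hSchur : IsUnit (R - Q' * P⁻¹ * Q).det := by
    have h := det_fromBlocks₁₁ P Q Q' R
    rw [← hblocks, invOf_eq_nonsing_inv] at h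
    rw [h] at hdet
    exact (mul_ne_zero_iff.mp hdet).2.isUnit
  set C := S.submatrix ιX ιY * (S.submatrix ιY ιY)⁻¹ with hC
  have hCN : C * (S.submatrix ιY ιY) = S.submatrix ιX ιY :=
    Matrix.nonsing_inv_mul_cancel_right _ _ hdet.isUnit
  set C₁ := C.toCols₁ with hC₁
  set C₂ := C.toCols₂ with hC₂
  have hCcols : C = fromCols C₁ C₂ := (fromCols_toCols C).symm
  rw [hCcols, hblocks, hXY, fromCols_mul_fromBlocks, fromCols_ext_iff] at hCN
  obtain ⟨e1, e2⟩ := hCN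
  have h1 : C₂ * Q' = A - C₁ * P := by rw [← e1]; abel
  have h2 : C₂ * R = B - C₁ * Q := by rw [← e2]; abel
  have key : C₂ * (R - Q' * P⁻¹ * Q) = B - A * P⁻¹ * Q := by
    have step : C₂ * (R - Q' * P⁻¹ * Q) = C₂ * R - C₂ * Q' * (P⁻¹ * Q) := by
      rw [Matrix.mul_sub]
      simp only [Matrix.mul_assoc]
    rw [step, h1, h2, Matrix.sub_mul]
    have h3 : C₁ * P * (P⁻¹ * Q) = C₁ * Q := by
      rw [Matrix.mul_assoc C₁, ← Matrix.mul_assoc P, Matrix.mul_nonsing_inv _ hdetP.isUnit,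
        Matrix.one_mul]
    rw [h3, ← Matrix.mul_assoc A]
    abel
  have hgoal : (C.submatrix id Sum.inr) = C₂ := by
    ext i j; rfl
  rw [hgoal]
  constructor
  · intro h
    rw [← key, h, Matrix.zero_mul]
  · intro h
    calc C₂ = C₂ * ((R - Q' * P⁻¹ * Q) * (R - Q' * P⁻¹ * Q)⁻¹) := by
          rw [Matrix.mul_nonsing_inv _ hSchur, Matrix.mul_one]
      _ = (B - A * P⁻¹ * Q) * (R - Q' * P⁻¹ * Q)⁻¹ := by rw [← Matrix.mul_assoc, key]
      _ = 0 := by rw [h, Matrix.zero_mul]
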